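/- Let q ≥ 2 and j ≥ 2, and define b_{j,m,n} by b_{j,m,1} = [1^m 0^j]_q and b_{j,m,n+1} = b_{j,m,n} - (q^{j+m-n} - 1). Then for all 1 ≤ n ≤ q^{j-1} and all m ≥ n - 1 (m ≥ 1), b_{j,m+1,n+1} = b_{j,m,n} + 1. -/

import Mathlib

/-- `[1^m 0^j]_q = ∑_{i<m} q^{j+i}`. -/
def onesZeros (q j m : ℕ) : ℕ := ∑ i ∈ Finset.range m, q ^ (j + i)

/-- `bSeq q j m t` is `b_{j,m,t+1}`, defined by `b_{j,m,1} = [1^m 0^j]_q`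
and `b_{j,m,n+1} = b_{j,m,n} - (q^{j+m-n} - 1)`. -/
def bSeq (q j m : ℕ) : ℕ → ℕ
  | 0 => onesZeros q j m
  | t + 1 => bSeq q j m t - (q ^ (j + m - t - 1) - 1)

/-- Each step removes the top summand `q ^ (j + m - t - 1)` of `[1^(m-t) 0^j]_q` and adds back
`1`; `0 < q` keeps the truncated subtraction `q ^ _ - 1` honest. -/
theorem bSeq_eq_onesZeros_add {q : ℕ} (hq : 0 < q) (j m : ℕ) {t : ℕ} (ht : t ≤ m) :
    bSeq q j m t = onesZeros q j (m - t) + t := by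
  induction t with
  | zero => rfl
  | succ t ih =>
    have htop : m - t = (m - (t + 1)) + 1 := by omega
    have hexp : j + (m - (t + 1)) = j + m - t - 1 := by omega
    have hpos : 0 < q ^ (j + m - t - 1) := pow_pos hq _
    rw [bSeq, ih (by omega), htop, onesZeros, Finset.sum_range_succ, hexp, ← onesZeros]
    omega

theorem stmt6_general (q j : ℕ) (hq : 2 ≤ q) (n m : ℕ)
    (hn1 : 1 ≤ n) (hm : n - 1 ≤ m) :
    bSeq q j (m + 1) n = bSeq q j m (n - 1) + 1 := by
  have hq' : 0 < q := by omega
  rw [bSeq_eq_onesZeros_add hq' j (m + 1) (by omega), bSeq_eq_onesZeros_add hq' j m hm,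
    show m + 1 - n = m - (n - 1) by omega]
  omega

/-- for `q ≥ 2`, `j ≥ 2`, `1 ≤ n ≤ q^{j-1}`, `m ≥ 1`, `m ≥ n-1`:
`b_{j,m+1,n+1} = b_{j,m,n} + 1`. -/
theorem stmt6 (q j : ℕ) (hq : 2 ≤ q) (hj : 2 ≤ j) (n m : ℕ)
    (hn1 : 1 ≤ n) (hn2 : n ≤ q ^ (j - 1)) (hm1 : 1 ≤ m) (hm : n - 1 ≤ m) :
    bSeq q j (m + 1) n = bSeq q j m (n - 1) + 1 :=
  stmt6_general q j hq n m hn1 hm
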